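/- Every graph in Δ_k has linear rank-width at least k+1, where Δ_0 consists of the single graph K_2 and Δ_k is the set of all delta compositions of three graphs in Δ_{k-1}. -/

import Mathlib

/-- The cut-rank of `X`: the rank over GF(2) of the adjacency submatrix
`A(G)[X, V \\ X]`. -/
noncomputable def cutRank {V : Type} [Fintype V] [DecidableEq V]
    (G : SimpleGraph V) (X : Finset V) : ℕ := by
  classical
  exact Matrix.rank (Matrix.of fun (i : X) (j : (Xᶜ : Finset V)) =>
    if G.Adj (i : V) (j : V) then (1 : ZMod 2) else 0)

/-- A linear layout is an ordering of all vertices. -/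
def IsLinearLayout {V : Type} (l : List V) : Prop := l.Nodup ∧ ∀ v : V, v ∈ l

/-- The width of a linear layout: the maximum cut-rank of an initial segment. -/
noncomputable def layoutWidth {V : Type} [Fintype V] [DecidableEq V]
    (G : SimpleGraph V) (l : List V) : ℕ :=
  (Finset.range l.length).sup fun i => cutRank G (l.take (i+1)).toFinset

/-- The linear rank-width of a graph. -/
noncomputable def linRankWidth {V : Type} [Fintype V] [DecidableEq V]
    (G : SimpleGraph V) : ℕ :=
  sInf {k | ∃ l : List V, IsLinearLayout l ∧ layoutWidth G l = k}

/-- The delta composition of three graphs: disjoint union plus a triangle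
`v₁v₂v₃` with one vertex in each part. -/
def deltaComp {V₁ V₂ V₃ : Type} (G₁ : SimpleGraph V₁) (G₂ : SimpleGraph V₂)
    (G₃ : SimpleGraph V₃) (v₁ : V₁) (v₂ : V₂) (v₃ : V₃) :
    SimpleGraph (V₁ ⊕ V₂ ⊕ V₃) where
  Adj x y := match x, y with
    | .inl a, .inl b => G₁.Adj a b
    | .inr (.inl a), .inr (.inl b) => G₂.Adj a b
    | .inr (.inr a), .inr (.inr b) => G₃.Adj a b
    | .inl a, .inr (.inl b) => a = v₁ ∧ b = v₂
    | .inr (.inl a), .inl b => a = v₂ ∧ b = v₁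
    | .inl a, .inr (.inr b) => a = v₁ ∧ b = v₃
    | .inr (.inr a), .inl b => a = v₃ ∧ b = v₁
    | .inr (.inl a), .inr (.inr b) => a = v₂ ∧ b = v₃
    | .inr (.inr a), .inr (.inl b) => a = v₃ ∧ b = v₂
  symm := by
    constructor
    rintro (a|a|a) (b|b|b) h
    · exact G₁.adj_symm h
    · exact ⟨h.2, h.1⟩
    · exact ⟨h.2, h.1⟩
    · exact ⟨h.2, h.1⟩
    · exact G₂.adj_symm h
    · exact ⟨h.2, h.1⟩
    · exact ⟨h.2, h.1⟩
    · exact ⟨h.2, h.1⟩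
    · exact G₃.adj_symm h
  loopless := by constructor; rintro (a|a|a) h <;> exact (SimpleGraph.irrefl _) h

/-- `InDelta k G` means `G` belongs to the class `Δ_k` (up to isomorphism):
`Δ_0 = {K₂}` and `Δ_k` is the set of delta compositions of three graphs in
`Δ_{k-1}`. -/
inductive InDelta : ℕ → {V : Type} → SimpleGraph V → Prop
  | base {V : Type} (G : SimpleGraph V)
      (e : Nonempty (G ≃g (⊤ : SimpleGraph (Fin 2)))) : InDelta 0 G
  | comp {k : ℕ} {V₁ V₂ V₃ V : Type} {G₁ : SimpleGraph V₁} {G₂ : SimpleGraph V₂}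
      {G₃ : SimpleGraph V₃} (G : SimpleGraph V) (v₁ : V₁) (v₂ : V₂) (v₃ : V₃)
      (h₁ : InDelta k G₁) (h₂ : InDelta k G₂) (h₃ : InDelta k G₃)
      (e : Nonempty (G ≃g deltaComp G₁ G₂ G₃ v₁ v₂ v₃)) : InDelta (k+1) G

/-!
Induction on `k`; the graphs in `Δ_k` are connected. Let `H` be a delta composition of graphs
of linear rank-width at least `K ≥ 1` and fix a linear layout of `H`. Restricting it to each of
the three parts shows that some initial segment cuts that part with rank at least `K`. Order the
three parts by the lengths of these segments and let `X` be the segment of the middle part `B`.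
The first part meets `X` and the last one is not contained in `X`; by connectivity of these two
parts and the triangle edge joining them, some edge of `H` outside `B` crosses `X`. As `B` is
attached to the rest of `H` through a single vertex, bordering the cut matrix of `B` by that
edge raises its rank, so `X` has cut-rank at least `K + 1`.
-/

open SimpleGraph

theorem Matrix.rank_submatrix_some_add_one_le {m n F : Type*} [Fintype m] [Fintype n] [Field F]
    (N : Matrix (Option m) (Option n) F) (hpivot : N none none ≠ 0)
    (hrow : ∀ j, N none (some j) = 0) :
    (N.submatrix some some).rank + 1 ≤ N.rank := by
  have hlt : (N.submatrix id some).rank < N.rank := by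
    rw [Matrix.rank_eq_finrank_span_cols, Matrix.rank_eq_finrank_span_cols]
    have hsub : Submodule.span F (Set.range (N.submatrix id some).col) ≤
        Submodule.span F (Set.range N.col) := by
      refine Submodule.span_mono ?_
      rintro _ ⟨j, rfl⟩
      exact ⟨some j, rfl⟩
    have hne : Submodule.span F (Set.range (N.submatrix id some).col) ≠
        Submodule.span F (Set.range N.col) := by
      intro heq
      have hker : Submodule.span F (Set.range (N.submatrix id some).col) ≤
          LinearMap.ker (LinearMap.proj (R := F) (φ := fun _ : Option m => F) none) :=
        Submodule.span_le.2 (by rintro _ ⟨j, rfl⟩; exact hrow j)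
      have hmem : N.col none ∈ Submodule.span F (Set.range (N.submatrix id some).col) :=
        heq ▸ Submodule.subset_span (Set.mem_range_self none)
      exact hpivot (hker hmem)
    exact Submodule.finrank_lt_finrank_of_lt (lt_of_le_of_ne hsub hne)
  have hle : (N.submatrix some some).rank ≤ (N.submatrix id some).rank := by
    simpa using Matrix.rank_submatrix_le (N.submatrix id some) some id
  omega

theorem Matrix.rank_submatrix_some_add_one_le' {m n F : Type*} [Fintype m] [Fintype n] [Field F]
    (N : Matrix (Option m) (Option n) F) (hpivot : N none none ≠ 0)
    (hcol : ∀ i, N (some i) none = 0) :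
    (N.submatrix some some).rank + 1 ≤ N.rank := by
  simpa [Matrix.rank_transpose, ← Matrix.transpose_submatrix] using
    Matrix.rank_submatrix_some_add_one_le N.transpose hpivot hcol

section CutRank

variable {V W : Type} [Fintype V] [DecidableEq V] [Fintype W] [DecidableEq W]

open scoped Classical in
noncomputable def cutMatrix (G : SimpleGraph V) (X : Finset V) :
    Matrix X (Xᶜ : Finset V) (ZMod 2) :=
  Matrix.of fun i j => if G.Adj i j then 1 else 0

theorem cutRank_eq_rank_cutMatrix (G : SimpleGraph V) (X : Finset V) :
    cutRank G X = (cutMatrix G X).rank := rfl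

theorem exists_mem_and_exists_notMem_of_cutRank_pos {G : SimpleGraph V} {X : Finset V}
    (h : 0 < cutRank G X) : (∃ x, x ∈ X) ∧ ∃ y, y ∉ X := by
  rw [cutRank_eq_rank_cutMatrix] at h
  have hX := h.trans_le (Matrix.rank_le_card_height _)
  have hXc := h.trans_le (Matrix.rank_le_card_width _)
  simp only [Fintype.card_coe, Finset.card_pos] at hX hXc
  obtain ⟨y, hy⟩ := hXc
  exact ⟨hX, y, Finset.mem_compl.1 hy⟩

theorem cutRank_pos_of_adj {G : SimpleGraph V} {X : Finset V} {x y : V} (hx : x ∈ X) (hy : y ∉ X)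
    (hxy : G.Adj x y) : 0 < cutRank G X := by
  have h := Matrix.rank_submatrix_le (cutMatrix G X) (fun _ : Unit => ⟨x, hx⟩)
    (fun _ : Unit => ⟨y, Finset.mem_compl.2 hy⟩)
  have hone : (cutMatrix G X).submatrix (fun _ : Unit => ⟨x, hx⟩)
      (fun _ : Unit => ⟨y, Finset.mem_compl.2 hy⟩) = 1 := by
    ext; simp [cutMatrix, hxy]
  rw [hone, Matrix.rank_one, Fintype.card_unit] at h
  exact h

theorem cutRank_map {G : SimpleGraph V} {H : SimpleGraph W} (e : G ≃g H) (X : Finset V) :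
    cutRank H (X.map e.toEquiv.toEmbedding) = cutRank G X := by
  let eX : X ≃ X.map e.toEquiv.toEmbedding :=
    e.toEquiv.subtypeEquiv fun a => (Finset.mem_map' _).symm
  let eXc : (Xᶜ : Finset V) ≃ ((X.map e.toEquiv.toEmbedding)ᶜ : Finset W) :=
    e.toEquiv.subtypeEquiv fun a =>
      Finset.mem_compl.trans ((Finset.mem_map' _).not.symm.trans Finset.mem_compl.symm)
  rw [cutRank_eq_rank_cutMatrix, cutRank_eq_rank_cutMatrix, ← Matrix.rank_submatrix _ eX eXc]
  congr 1
  ext i j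
  classical
  exact if_congr e.map_adj_iff rfl rfl

theorem cutRank_preimage_add_one_le {G : SimpleGraph V} {H : SimpleGraph W} (f : G ↪g H) {w : W}
    (hf : ∀ x y, H.Adj (f x) y → y ∉ Set.range f → f x = w) {X : Finset W} {r c : W}
    (hr : r ∈ X) (hc : c ∉ X) (hrf : r ∉ Set.range f) (hcf : c ∉ Set.range f) (hrc : H.Adj r c) :
    cutRank G (X.preimage f f.injective.injOn) + 1 ≤ cutRank H X := by
  set Y := X.preimage f f.injective.injOn
  let rows : Option Y → X := fun o => o.elim ⟨r, hr⟩ fun y => ⟨f y, Finset.mem_preimage.1 y.2⟩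
  let cols : Option (Yᶜ : Finset V) → (Xᶜ : Finset W) := fun o =>
    o.elim ⟨c, Finset.mem_compl.2 hc⟩ fun y =>
      ⟨f y, Finset.mem_compl.2 fun h => Finset.mem_compl.1 y.2 (Finset.mem_preimage.2 h)⟩
  -- the cut matrix of `G` bordered by the row `r` and the column `c`
  set N := (cutMatrix H X).submatrix rows cols
  have hB : N.submatrix some some = cutMatrix G Y := by
    ext i j
    classical
    exact if_congr f.map_adj_iff rfl rfl
  have h1 : N none none ≠ 0 := by simp [N, rows, cols, cutMatrix, hrc]
  -- the part meets the rest of `H` only at `w`: on the part, row `r` vanishes if `w ∈ X`,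
  -- column `c` vanishes otherwise
  have hN : (N.submatrix some some).rank + 1 ≤ N.rank := by
    by_cases hw : w ∈ X
    · refine N.rank_submatrix_some_add_one_le h1 fun j => ?_
      have hrj : ¬H.Adj r (f j) := fun hadj =>
        Finset.mem_compl.1 j.2 (Finset.mem_preimage.2 (hf j r hadj.symm hrf ▸ hw))
      simp [N, rows, cols, cutMatrix, hrj]
    · refine N.rank_submatrix_some_add_one_le' h1 fun i => ?_
      have hic : ¬H.Adj (f i) c := fun hadj =>
        hw (hf i c hadj hcf ▸ Finset.mem_preimage.1 i.2)
      simp [N, rows, cols, cutMatrix, hic]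
  calc cutRank G Y + 1 = (N.submatrix some some).rank + 1 := by rw [hB]; rfl
    _ ≤ N.rank := hN
    _ ≤ cutRank H X := Matrix.rank_submatrix_le _ _ _

end CutRank

section Layout

theorem IsLinearLayout.map {V W : Type} {l : List V} (hl : IsLinearLayout l) (e : V ≃ W) :
    IsLinearLayout (l.map e) :=
  ⟨hl.1.map e.injective, fun w => List.mem_map.2 ⟨e.symm w, hl.2 _, e.apply_symm_apply w⟩⟩

theorem IsLinearLayout.filterMap_partialInv {V W : Type} {l : List W} (hl : IsLinearLayout l)
    {f : V → W} (hf : f.Injective) : IsLinearLayout (l.filterMap (Function.partialInv f)) := by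
  refine ⟨hl.1.filterMap (Function.injective_of_isPartialInv_right hf.isPartialInv), fun u => ?_⟩
  exact List.mem_filterMap.2 ⟨f u, hl.2 _, hf.isPartialInv.eq u⟩

theorem List.toFinset_filterMap_partialInv {V W : Type} [DecidableEq V] [DecidableEq W]
    (l : List W) {f : V → W} (hf : f.Injective) :
    (l.filterMap (Function.partialInv f)).toFinset = l.toFinset.preimage f hf.injOn := by
  ext u
  simp [hf.isPartialInv u]

theorem exists_isLinearLayout {V : Type} [Fintype V] : ∃ l : List V, IsLinearLayout l :=
  ⟨Finset.univ.toList, Finset.nodup_toList _, fun v => Finset.mem_toList.2 (Finset.mem_univ v)⟩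

variable {V W : Type} [Fintype V] [DecidableEq V] [Fintype W] [DecidableEq W]

theorem linRankWidth_le_layoutWidth (G : SimpleGraph V) {l : List V} (hl : IsLinearLayout l) :
    linRankWidth G ≤ layoutWidth G l :=
  Nat.sInf_le ⟨l, hl, rfl⟩

theorem le_linRankWidth {G : SimpleGraph V} {K : ℕ}
    (h : ∀ l, IsLinearLayout l → K ≤ layoutWidth G l) : K ≤ linRankWidth G := by
  obtain ⟨l, hl⟩ := exists_isLinearLayout (V := V)
  refine le_csInf ⟨_, l, hl, rfl⟩ ?_
  rintro _ ⟨l, hl, rfl⟩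
  exact h l hl

theorem cutRank_le_layoutWidth (G : SimpleGraph V) {p l : List V} (hp : p <+: l) :
    cutRank G p.toFinset ≤ layoutWidth G l := by
  rcases Nat.eq_zero_or_pos (cutRank G p.toFinset) with h | h
  · exact h ▸ Nat.zero_le _
  obtain ⟨⟨x, hx⟩, -⟩ := exists_mem_and_exists_notMem_of_cutRank_pos h
  obtain ⟨i, hi⟩ := Nat.exists_eq_add_one_of_ne_zero
    (List.length_pos_of_mem (List.mem_toFinset.1 hx)).ne'
  have hil : i < l.length := by have := hp.length_le; omega
  rw [List.prefix_iff_eq_take.1 hp, hi]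
  exact Finset.le_sup (f := fun i => cutRank G (l.take (i + 1)).toFinset) (Finset.mem_range.2 hil)

theorem le_linRankWidth_iff {G : SimpleGraph V} {K : ℕ} (hK : 0 < K) :
    K ≤ linRankWidth G ↔ ∀ l, IsLinearLayout l → ∃ p, p <+: l ∧ K ≤ cutRank G p.toFinset := by
  refine ⟨fun h l hl => ?_, fun h => le_linRankWidth fun l hl => ?_⟩
  · obtain ⟨i, -, hi⟩ := (Finset.le_sup_iff hK).1 (h.trans (linRankWidth_le_layoutWidth G hl))
    exact ⟨_, List.take_prefix _ _, hi⟩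
  · obtain ⟨p, hp, hKp⟩ := h l hl
    exact hKp.trans (cutRank_le_layoutWidth G hp)

theorem layoutWidth_map {G : SimpleGraph V} {H : SimpleGraph W} (e : G ≃g H) (l : List V) :
    layoutWidth H (l.map e) = layoutWidth G l := by
  unfold layoutWidth
  rw [List.length_map]
  refine Finset.sup_congr rfl fun i _ => ?_
  rw [← List.map_take, ← cutRank_map e]
  congr 1
  ext w
  simp only [List.mem_toFinset, List.mem_map, Finset.mem_map, Equiv.coe_toEmbedding,
    RelIso.coe_fn_toEquiv]

theorem linRankWidth_le_of_iso {G : SimpleGraph V} {H : SimpleGraph W} (e : G ≃g H) :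
    linRankWidth H ≤ linRankWidth G :=
  le_linRankWidth fun l hl =>
    (linRankWidth_le_layoutWidth H (hl.map e.toEquiv)).trans_eq (layoutWidth_map e l)

theorem linRankWidth_congr {G : SimpleGraph V} {H : SimpleGraph W} (e : G ≃g H) :
    linRankWidth G = linRankWidth H :=
  (linRankWidth_le_of_iso e.symm).antisymm (linRankWidth_le_of_iso e)

end Layout

theorem exists_prefix_le_cutRank_preimage {V W : Type} [Fintype V] [DecidableEq V]
    [DecidableEq W] {G : SimpleGraph V} {H : SimpleGraph W} (f : G ↪g H)
    {K : ℕ} (hK : 0 < K) (hG : K ≤ linRankWidth G) {l : List W} (hl : IsLinearLayout l) :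
    ∃ p, p <+: l ∧ K ≤ cutRank G (p.toFinset.preimage f f.injective.injOn) := by
  obtain ⟨p', hp', hKp'⟩ := (le_linRankWidth_iff hK).1 hG _ (hl.filterMap_partialInv f.injective)
  obtain ⟨p, hp, rfl⟩ := List.prefix_filterMap_iff.1 hp'
  exact ⟨p, hp, by rwa [List.toFinset_filterMap_partialInv p f.injective] at hKp'⟩

theorem SimpleGraph.Preconnected.exists_adj_mem_notMem {V : Type} {G : SimpleGraph V}
    (hG : G.Preconnected) {S : Set V} {a b : V} (ha : a ∈ S) (hb : b ∉ S) :
    ∃ x y, G.Adj x y ∧ x ∈ S ∧ y ∉ S := by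
  obtain ⟨p⟩ := hG a b
  obtain ⟨d, -, hd₁, hd₂⟩ := p.exists_boundary_dart S ha hb
  exact ⟨_, _, d.adj, hd₁, hd₂⟩

theorem succ_le_cutRank_of_middle_part {W : Type} [Fintype W] [DecidableEq W]
    {H : SimpleGraph W} {A B C : Set W} [Fintype B] {a b c : W} (ha : a ∈ A) (hc : c ∈ C)
    (hAB : Disjoint A B) (hCB : Disjoint C B) (hA : (H.induce A).Preconnected)
    (hC : (H.induce C).Preconnected) (hB : ∀ x ∈ B, ∀ y ∉ B, H.Adj x y → x = b)
    (hac : H.Adj a c) {X : Finset W} (hXA : ∃ x ∈ A, x ∈ X) (hXC : ∃ y ∈ C, y ∉ X) :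
    cutRank (H.induce B) (X.preimage Subtype.val Subtype.val_injective.injOn) + 1 ≤
      cutRank H X := by
  have crossing : ∀ {D : Set W}, (H.induce D).Preconnected → Disjoint D B →
      ∀ {x y : W}, x ∈ D → y ∈ D → x ∈ X → y ∉ X →
      ∃ r s, H.Adj r s ∧ r ∈ X ∧ s ∉ X ∧ r ∉ B ∧ s ∉ B := by
    intro D hD hDB x y hx hy hxX hyX
    obtain ⟨r, s, hrs, hr, hs⟩ :=
      hD.exists_adj_mem_notMem (S := {z : D | z.1 ∈ X}) (a := ⟨x, hx⟩) (b := ⟨y, hy⟩) hxX hyX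
    exact ⟨r, s, hrs, hr, hs, hDB.notMem_of_mem_left r.2, hDB.notMem_of_mem_left s.2⟩
  obtain ⟨r, s, hrs, hr, hs, hrB, hsB⟩ : ∃ r s, H.Adj r s ∧ r ∈ X ∧ s ∉ X ∧ r ∉ B ∧ s ∉ B := by
    obtain ⟨x, hxA, hxX⟩ := hXA
    obtain ⟨y, hyC, hyX⟩ := hXC
    by_cases haX : a ∈ X
    · by_cases hcX : c ∈ X
      · exact crossing hC hCB hc hyC hcX hyX
      · exact ⟨a, c, hac, haX, hcX, hAB.notMem_of_mem_left ha, hCB.notMem_of_mem_left hc⟩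
    · exact crossing hA hAB hxA ha hxX haX
  refine cutRank_preimage_add_one_le (Embedding.induce B) (w := b) (fun x y hxy hy => ?_)
    hr hs (by simpa using hrB) (by simpa using hsB) hrs
  exact hB x x.2 y (by simpa using hy) hxy

theorem succ_le_linRankWidth_of_three_parts {W : Type} [Fintype W] [DecidableEq W]
    {H : SimpleGraph W} {P : Fin 3 → Set W} [∀ i, Fintype (P i)] {v : Fin 3 → W}
    (hv : ∀ i, v i ∈ P i) (hP : Pairwise fun i j => Disjoint (P i) (P j))
    (hconn : ∀ i, (H.induce (P i)).Preconnected)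
    (hpend : ∀ i, ∀ x ∈ P i, ∀ y ∉ P i, H.Adj x y → x = v i)
    (hadj : Pairwise fun i j => H.Adj (v i) (v j)) {K : ℕ} (hK : 0 < K)
    (hwidth : ∀ i, K ≤ linRankWidth (H.induce (P i))) : K + 1 ≤ linRankWidth H := by
  refine (le_linRankWidth_iff K.succ_pos).2 fun l hl => ?_
  choose p hp hKp using fun i =>
    exists_prefix_le_cutRank_preimage (Embedding.induce (P i)) hK (hwidth i) hl
  -- sort the parts by the length of their witnessing prefixes and cut at the middle one
  set σ := Tuple.sort fun i => (p i).length
  have hσ : ∀ i j, i ≤ j → p (σ i) <+: p (σ j) := fun i j hij =>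
    List.prefix_of_prefix_length_le (hp _) (hp _) (Tuple.monotone_sort (fun i => (p i).length) hij)
  have hσne : ∀ i j : Fin 3, i ≠ j → σ i ≠ σ j := fun i j => σ.injective.ne
  obtain ⟨⟨x, hx⟩, -⟩ := exists_mem_and_exists_notMem_of_cutRank_pos (hK.trans_le (hKp (σ 0)))
  obtain ⟨-, ⟨y, hy⟩⟩ := exists_mem_and_exists_notMem_of_cutRank_pos (hK.trans_le (hKp (σ 2)))
  rw [Finset.mem_preimage, List.mem_toFinset] at hx hy
  refine ⟨p (σ 1), hp _, (Nat.add_le_add_right (hKp (σ 1)) 1).trans ?_⟩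
  refine succ_le_cutRank_of_middle_part (hv (σ 0)) (hv (σ 2)) (hP (hσne 0 1 (by decide)))
    (hP (hσne 2 1 (by decide))) (hconn _) (hconn _) (hpend _) (hadj (hσne 0 2 (by decide)))
    ⟨x, x.2, List.mem_toFinset.2 ((hσ 0 1 (by decide)).subset hx)⟩
    ⟨y, y.2, fun hy' => hy ((hσ 1 2 (by decide)).subset (List.mem_toFinset.1 hy'))⟩

namespace deltaComp

variable {V₁ V₂ V₃ : Type} {G₁ : SimpleGraph V₁} {G₂ : SimpleGraph V₂} {G₃ : SimpleGraph V₃}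
  {v₁ : V₁} {v₂ : V₂} {v₃ : V₃}

def embed₁ : G₁ ↪g deltaComp G₁ G₂ G₃ v₁ v₂ v₃ where
  toFun := Sum.inl
  inj' := Sum.inl_injective
  map_rel_iff' := Iff.rfl

def embed₂ : G₂ ↪g deltaComp G₁ G₂ G₃ v₁ v₂ v₃ where
  toFun := Sum.inr ∘ Sum.inl
  inj' := Sum.inr_injective.comp Sum.inl_injective
  map_rel_iff' := Iff.rfl

def embed₃ : G₃ ↪g deltaComp G₁ G₂ G₃ v₁ v₂ v₃ where
  toFun := Sum.inr ∘ Sum.inr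
  inj' := Sum.inr_injective.comp Sum.inr_injective
  map_rel_iff' := Iff.rfl

theorem preconnected (h₁ : G₁.Preconnected) (h₂ : G₂.Preconnected) (h₃ : G₃.Preconnected) :
    (deltaComp G₁ G₂ G₃ v₁ v₂ v₃).Preconnected := by
  have key : ∀ x, (deltaComp G₁ G₂ G₃ v₁ v₂ v₃).Reachable x (.inl v₁) := by
    rintro (x | x | x)
    · exact (h₁ x v₁).map embed₁.toHom
    · exact ((h₂ x v₂).map embed₂.toHom).trans (SimpleGraph.Adj.reachable ⟨rfl, rfl⟩)
    · exact ((h₃ x v₃).map embed₃.toHom).trans (SimpleGraph.Adj.reachable ⟨rfl, rfl⟩)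
  exact fun x y => (key x).trans (key y).symm

theorem succ_le_linRankWidth [Fintype V₁] [DecidableEq V₁] [Fintype V₂] [DecidableEq V₂]
    [Fintype V₃] [DecidableEq V₃] (h₁ : G₁.Preconnected) (h₂ : G₂.Preconnected)
    (h₃ : G₃.Preconnected) {K : ℕ} (hK : 0 < K) (hw₁ : K ≤ linRankWidth G₁)
    (hw₂ : K ≤ linRankWidth G₂) (hw₃ : K ≤ linRankWidth G₃) :
    K + 1 ≤ linRankWidth (deltaComp G₁ G₂ G₃ v₁ v₂ v₃) := by
  let P : Fin 3 → Set (V₁ ⊕ V₂ ⊕ V₃) :=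
    ![Set.range Sum.inl, Set.range (Sum.inr ∘ Sum.inl), Set.range (Sum.inr ∘ Sum.inr)]
  let _ : ∀ i, Fintype (P i) := fun i => Fintype.ofFinite _
  let H := deltaComp G₁ G₂ G₃ v₁ v₂ v₃
  have e₁ : G₁ ≃g H.induce (P 0) := SimpleGraph.Embedding.isoInduceRange embed₁
  have e₂ : G₂ ≃g H.induce (P 1) := SimpleGraph.Embedding.isoInduceRange embed₂
  have e₃ : G₃ ≃g H.induce (P 2) := SimpleGraph.Embedding.isoInduceRange embed₃
  refine succ_le_linRankWidth_of_three_parts (P := P)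
    (v := ![.inl v₁, .inr (.inl v₂), .inr (.inr v₃)]) ?_ ?_ ?_ ?_ ?_ hK ?_
  · intro i
    fin_cases i <;> exact ⟨_, rfl⟩
  · intro i j hij
    fin_cases i <;> fin_cases j <;> simp_all [P, Set.disjoint_left]
  · intro i
    fin_cases i
    exacts [e₁.preconnected_iff.1 h₁, e₂.preconnected_iff.1 h₂, e₃.preconnected_iff.1 h₃]
  · intro i x hx y hy hxy
    fin_cases i <;> rcases x with x | x | x <;> rcases y with y | y | y <;> simp_all [P, deltaComp]
  · intro i j hij
    fin_cases i <;> fin_cases j <;> simp_all [deltaComp]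
  · intro i
    fin_cases i
    exacts [hw₁.trans_eq (linRankWidth_congr e₁), hw₂.trans_eq (linRankWidth_congr e₂),
      hw₃.trans_eq (linRankWidth_congr e₃)]

end deltaComp

theorem one_le_linRankWidth {V : Type} [Fintype V] [DecidableEq V] [Nontrivial V]
    {G : SimpleGraph V} (hG : G.Preconnected) : 1 ≤ linRankWidth G := by
  refine (le_linRankWidth_iff one_pos).2 fun l hl => ?_
  cases l with
  | nil => exact absurd (hl.2 (Classical.arbitrary V)) List.not_mem_nil
  | cons a t =>
    obtain ⟨b, hab⟩ := hG.exists_adj_of_nontrivial a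
    exact ⟨[a], ⟨t, rfl⟩, cutRank_pos_of_adj (by simp) (by simpa using hab.ne.symm) hab⟩

theorem InDelta.preconnected {k : ℕ} {V : Type} {G : SimpleGraph V} (h : InDelta k G) :
    G.Preconnected := by
  induction h with
  | base G e =>
    obtain ⟨e⟩ := e
    exact e.preconnected_iff.2 SimpleGraph.connected_top.preconnected
  | comp G _ _ _ _ _ _ e ih₁ ih₂ ih₃ =>
    obtain ⟨e⟩ := e
    exact e.preconnected_iff.2 (deltaComp.preconnected ih₁ ih₂ ih₃)

theorem delta_linRankWidth_lower {V : Type} [Fintype V] [DecidableEq V]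
    (k : ℕ) (G : SimpleGraph V) (hG : InDelta k G) :
    k + 1 ≤ linRankWidth G := by
  revert ‹Fintype V› ‹DecidableEq V›
  induction hG with
  | @base V G e =>
    intro _ _
    have : Nontrivial V := e.some.toEquiv.nontrivial
    exact one_le_linRankWidth (InDelta.base G e).preconnected
  | @comp k V₁ V₂ V₃ V G₁ G₂ G₃ G v₁ v₂ v₃ h₁ h₂ h₃ e ih₁ ih₂ ih₃ =>
    intro _ _
    obtain ⟨e⟩ := e
    let _ : Fintype V₁ := .ofInjective _ (e.symm.toEmbedding.comp deltaComp.embed₁).injective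
    let _ : Fintype V₂ := .ofInjective _ (e.symm.toEmbedding.comp deltaComp.embed₂).injective
    let _ : Fintype V₃ := .ofInjective _ (e.symm.toEmbedding.comp deltaComp.embed₃).injective
    classical
    calc k + 1 + 1 ≤ linRankWidth (deltaComp G₁ G₂ G₃ v₁ v₂ v₃) :=
          deltaComp.succ_le_linRankWidth h₁.preconnected h₂.preconnected h₃.preconnected
            k.succ_pos ih₁ ih₂ ih₃
      _ = linRankWidth G := (linRankWidth_congr e).symm
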